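/- Fix $d \ge 1$, an orthonormal basis $a_1,\dots,a_d$ of $\mathbb{R}^d$, $b \in \{-1,1\}^d$, and an index $i \in \{1,\dots,d\}$. For $w$ in the closed unit ball $\mathcal{X}$, define $f_j(w) = |\langle a_j, w\rangle - b_j/\sqrt{d}|$, $\mathcal{X}_i = \{w \in \mathcal{X} : f_i(w) > f_j(w) \text{ for all } j < i,\ f_i(w) \ge f_j(w) \text{ for all } j \ge i,\ |\langle a_i, w\rangle| \le 1/\sqrt{d}\}$ and $\mathcal{X}_i' = \{w \in \mathcal{X} : \langle a_i b_i, w\rangle < \langle a_j b_j, w\rangle \text{ for all } j < i,\ \langle a_i b_i, w\rangle \le \langle a_j b_j, w\rangle \text{ for all } j \ge i,\ |\langle a_i b_i, w\rangle| \le 1/\sqrt{d}\}$. Then $\mathcal{X}_i \subseteq \mathcal{X}_i'$. -/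

import Mathlib

/-!
Put `tⱼ = ⟪bⱼ • aⱼ, w⟫` and `c = 1/√d`. Since `bⱼ = ±1`, `fⱼ(w) = |tⱼ - c|`, and `|tᵢ| ≤ c` gives
`fᵢ(w) = c - tᵢ`. Hence `c - tⱼ ≤ fⱼ(w) ≤ fᵢ(w) = c - tᵢ`, i.e. `tᵢ ≤ tⱼ`, strictly when `fⱼ(w) < fᵢ(w)`.
-/

open scoped RealInnerProductSpace

section Order

variable {α : Type*} [AddCommGroup α] [LinearOrder α] [IsOrderedAddMonoid α] {x y c : α}

theorem le_of_abs_sub_le_abs_sub (hx : x ≤ c) (h : |y - c| ≤ |x - c|) : x ≤ y := by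
  rw [abs_sub_comm x, abs_of_nonneg (sub_nonneg.2 hx), abs_sub_comm] at h
  exact sub_le_sub_iff_left c |>.1 ((le_abs_self _).trans h)

theorem lt_of_abs_sub_lt_abs_sub (hx : x ≤ c) (h : |y - c| < |x - c|) : x < y := by
  rw [abs_sub_comm x, abs_of_nonneg (sub_nonneg.2 hx), abs_sub_comm] at h
  exact sub_lt_sub_iff_left c |>.1 ((le_abs_self _).trans_lt h)

end Order

section InnerSign

variable {E : Type*} [NormedAddCommGroup E] [InnerProductSpace ℝ E] {s : ℝ}

theorem abs_inner_smul_left_of_sign (hs : s = 1 ∨ s = -1) (v w : E) :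
    |⟪s • v, w⟫| = |⟪v, w⟫| := by
  rcases hs with rfl | rfl <;> simp

theorem abs_inner_sub_div_eq_of_sign (hs : s = 1 ∨ s = -1) (v w : E) (r : ℝ) :
    |⟪v, w⟫ - s / r| = |⟪s • v, w⟫ - 1 / r| := by
  rcases hs with rfl | rfl
  · simp
  · rw [real_inner_smul_left, ← abs_neg]
    ring_nf

end InnerSign

theorem stmt2_general (d : ℕ)
    (a : OrthonormalBasis (Fin d) ℝ (EuclideanSpace ℝ (Fin d)))
    (b : Fin d → ℝ) (hb : ∀ i, b i = 1 ∨ b i = -1)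
    (i : Fin d)
    (X : Set (EuclideanSpace ℝ (Fin d)))
    (f : Fin d → EuclideanSpace ℝ (Fin d) → ℝ)
    (hf : ∀ j x, f j x = |⟪a j, x⟫ - b j / Real.sqrt d|)
    (Xi Xi' : Set (EuclideanSpace ℝ (Fin d)))
    (hXi : Xi = {w ∈ X | (∀ j, j < i → f i w > f j w) ∧ (∀ j, i ≤ j → f i w ≥ f j w) ∧
      |⟪a i, w⟫| ≤ 1 / Real.sqrt d})
    (hXi' : Xi' = {w ∈ X | (∀ j, j < i → ⟪b i • a i, w⟫ < ⟪b j • a j, w⟫) ∧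
      (∀ j, i ≤ j → ⟪b i • a i, w⟫ ≤ ⟪b j • a j, w⟫) ∧
      |⟪b i • a i, w⟫| ≤ 1 / Real.sqrt d}) :
    Xi ⊆ Xi' := by
  subst hXi hXi'
  rintro w ⟨hwX, hlt, hle, hbound⟩
  have hf' : ∀ j, f j w = |⟪b j • a j, w⟫ - 1 / Real.sqrt d| := fun j => by
    rw [hf, abs_inner_sub_div_eq_of_sign (hb j)]
  have hbound' : |⟪b i • a i, w⟫| ≤ 1 / Real.sqrt d := by
    rwa [abs_inner_smul_left_of_sign (hb i)]
  have hci : ⟪b i • a i, w⟫ ≤ 1 / Real.sqrt d := (abs_le.1 hbound').2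
  refine ⟨hwX, fun j hj => ?_, fun j hj => ?_, hbound'⟩
  · exact lt_of_abs_sub_lt_abs_sub hci (by simpa only [hf'] using hlt j hj)
  · exact le_of_abs_sub_le_abs_sub hci (by simpa only [hf'] using hle j hj)

/-- Lemma 1: `𝒳ᵢ ⊆ 𝒳ᵢ'`. -/
theorem stmt2 (d : ℕ) (hd : 0 < d)
    (a : OrthonormalBasis (Fin d) ℝ (EuclideanSpace ℝ (Fin d)))
    (b : Fin d → ℝ) (hb : ∀ i, b i = 1 ∨ b i = -1)
    (i : Fin d)
    (X : Set (EuclideanSpace ℝ (Fin d)))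
    (hX : X = Metric.closedBall (0 : EuclideanSpace ℝ (Fin d)) 1)
    (f : Fin d → EuclideanSpace ℝ (Fin d) → ℝ)
    (hf : ∀ j x, f j x = |⟪a j, x⟫ - b j / Real.sqrt d|)
    (Xi Xi' : Set (EuclideanSpace ℝ (Fin d)))
    (hXi : Xi = {w ∈ X | (∀ j, j < i → f i w > f j w) ∧ (∀ j, i ≤ j → f i w ≥ f j w) ∧
      |⟪a i, w⟫| ≤ 1 / Real.sqrt d})
    (hXi' : Xi' = {w ∈ X | (∀ j, j < i → ⟪b i • a i, w⟫ < ⟪b j • a j, w⟫) ∧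
      (∀ j, i ≤ j → ⟪b i • a i, w⟫ ≤ ⟪b j • a j, w⟫) ∧
      |⟪b i • a i, w⟫| ≤ 1 / Real.sqrt d}) :
    Xi ⊆ Xi' :=
  stmt2_general d a b hb i X f hf Xi Xi' hXi hXi'
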